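/- Define K(p,d) = π^{p(d−p)/2} · (∏_{i=1}^p Γ(i/2) ∏_{i=1}^{d−p} Γ(i/2)) / (∏_{i=1}^d Γ(i/2)) · (p(d−p)/(2π))^{(p(d−p)+1)/2}. Then for fixed p ≥ 2, lim_{d→∞} (1/(p(d−p))) log K(p,d) = (log p + 1)/2. -/

import Mathlib

/-!
Put `d = n + p`. The Gamma products telescope: `K(p, n + p)` only involves `∏_{i ≤ p} Γ(i/2)`
and the `p` factors `Γ(i/2)`, `n < i ≤ n + p`. Since `Γ` is increasing on `[2, ∞)`, each of the
latter lies between `⌊(n-1)/2⌋!` and `⌊(n+p)/2⌋!`, so Stirling's `log m! = m log m - m + o(m)`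
at `m ≈ n/2` gives `(1/(pn)) ∑_{n < i ≤ n+p} log Γ(i/2) = (log n)/2 - (log 2 + 1)/2 + o(1)`.
The powers of `π` and of `pn/(2π)` contribute `(log π)/2 + (log (pn/(2π)))/2 + o(1)`, and the
`log n` terms cancel.
-/

open scoped BigOperators
open Filter

/-- The Kac–Rice volume-and-normalization constant
`K(p,d) = π^{p(d-p)/2} · (∏_{i=1}^p Γ(i/2) ∏_{i=1}^{d-p} Γ(i/2)) / ∏_{i=1}^d Γ(i/2)
· (p(d-p)/(2π))^{(p(d-p)+1)/2}`. -/
noncomputable def kacRiceConst (p d : ℕ) : ℝ :=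
  Real.pi ^ (((p : ℝ) * ((d : ℝ) - (p : ℝ))) / 2) *
    ((∏ i ∈ Finset.Icc 1 p, Real.Gamma ((i : ℝ) / 2)) *
      (∏ i ∈ Finset.Icc 1 (d - p), Real.Gamma ((i : ℝ) / 2)) /
      ∏ i ∈ Finset.Icc 1 d, Real.Gamma ((i : ℝ) / 2)) *
    (((p : ℝ) * ((d : ℝ) - (p : ℝ))) / (2 * Real.pi)) ^
      ((((p : ℝ) * ((d : ℝ) - (p : ℝ))) + 1) / 2)


open Real Topology
open scoped Nat

lemma tendsto_log_natCast_div_self :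
    Tendsto (fun n : ℕ => log n / n) atTop (𝓝 0) :=
  Real.isLittleO_log_id_atTop.tendsto_div_nhds_zero.comp tendsto_natCast_atTop_atTop

lemma tendsto_log_factorial_div_sub_log :
    Tendsto (fun n : ℕ => log n ! / n - log n) atTop (𝓝 (-1)) := by
  have hseq : Tendsto (fun n : ℕ => log (Stirling.stirlingSeq n) / n) atTop (𝓝 0) := by
    simpa using ((continuousAt_log (by positivity)).tendsto.comp
      Stirling.tendsto_stirlingSeq_sqrt_pi).div_atTop tendsto_natCast_atTop_atTop
  have hlog2 : Tendsto (fun n : ℕ => log 2 / 2 / n + log n / n / 2) atTop (𝓝 0) := by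
    simpa using (tendsto_const_nhds.div_atTop tendsto_natCast_atTop_atTop).add
      (tendsto_log_natCast_div_self.div_const 2)
  refine (by simpa using (hseq.add hlog2).sub_const 1 :
    Tendsto (fun n : ℕ => log (Stirling.stirlingSeq n) / n
      + (log 2 / 2 / n + log n / n / 2) - 1) atTop (𝓝 (-1))).congr' ?_
  filter_upwards [eventually_gt_atTop 0] with n hn
  have hn : (0 : ℝ) < n := Nat.cast_pos.mpr hn
  rw [Stirling.log_stirlingSeq_formula, log_mul two_ne_zero hn.ne', log_div hn.ne' (exp_ne_zero 1),
    log_exp]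
  field_simp
  ring

lemma tendsto_log_factorial_comp_div_sub_log {a C : ℝ} (ha : 0 < a) {j : ℕ → ℕ}
    (hj : ∀ᶠ n in atTop, |(j n : ℝ) - a * n| ≤ C) :
    Tendsto (fun n : ℕ => log (j n)! / n - a * log n) atTop (𝓝 (a * (log a - 1))) := by
  have hbdd : IsBoundedUnder (· ≤ ·) atTop (fun n => ‖(j n : ℝ) - a * n‖) :=
    isBoundedUnder_of_eventually_le hj
  have hratio : Tendsto (fun n : ℕ => (j n : ℝ) / n) atTop (𝓝 a) := by
    rw [← tendsto_sub_nhds_zero_iff]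
    refine (tendsto_one_div_atTop_nhds_zero_nat.zero_mul_isBoundedUnder_le hbdd).congr' ?_
    filter_upwards [eventually_gt_atTop 0] with n hn
    field_simp [(Nat.cast_pos.mpr hn).ne']
  have hj_top : Tendsto j atTop atTop :=
    tendsto_natCast_atTop_iff.mp <|
      (hratio.pos_mul_atTop ha tendsto_natCast_atTop_atTop).congr' <| by
        filter_upwards [eventually_gt_atTop 0] with n hn
        field_simp [(Nat.cast_pos.mpr hn).ne']
  have herr : Tendsto (fun n : ℕ => ((j n : ℝ) / n - a) * log n) atTop (𝓝 0) := by
    refine (tendsto_log_natCast_div_self.zero_mul_isBoundedUnder_le hbdd).congr' ?_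
    filter_upwards [eventually_gt_atTop 0] with n hn
    field_simp
  -- `log (j n)! / n - a log n = (j/n) (log j! / j - log j) + (j/n) log (j/n) + (j/n - a) log n`
  have hlim := ((hratio.mul (tendsto_log_factorial_div_sub_log.comp hj_top)).add
    (hratio.mul ((continuousAt_log ha.ne').tendsto.comp hratio))).add herr
  rw [show a * -1 + a * log a + 0 = a * (log a - 1) by ring] at hlim
  refine hlim.congr' ?_
  filter_upwards [eventually_gt_atTop 0, hj_top.eventually_gt_atTop 0] with n hn hjn
  have hn : (0 : ℝ) < n := Nat.cast_pos.mpr hn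
  have hjn : (0 : ℝ) < j n := Nat.cast_pos.mpr hjn
  simp only [Function.comp_apply, log_div hjn.ne' hn.ne']
  field_simp
  ring

lemma log_Gamma_le_log_Gamma {x y : ℝ} (hx : 2 ≤ x) (hxy : x ≤ y) :
    log (Gamma x) ≤ log (Gamma y) :=
  log_le_log (Gamma_pos_of_pos (by linarith))
    (Gamma_strictMonoOn_Ici.monotoneOn hx (le_trans hx hxy) hxy)

lemma card_mul_log_factorial_le_sum_log_Gamma_half {m : ℕ} {s : Finset ℕ} (hm : 1 ≤ m)
    (hs : ∀ i ∈ s, 2 * (m + 1) ≤ i) :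
    s.card * log m ! ≤ ∑ i ∈ s, log (Gamma (i / 2)) := by
  rw [← nsmul_eq_mul, ← Gamma_nat_eq_factorial]
  refine Finset.card_nsmul_le_sum _ _ _ fun i hi => log_Gamma_le_log_Gamma ?_ ?_
  · have : (1 : ℝ) ≤ m := by exact_mod_cast hm
    linarith
  · have : (2 * (m + 1) : ℝ) ≤ i := by exact_mod_cast hs i hi
    linarith

lemma sum_log_Gamma_half_le_card_mul_log_factorial {m : ℕ} {s : Finset ℕ}
    (hs : ∀ i ∈ s, 4 ≤ i ∧ i ≤ 2 * (m + 1)) :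
    ∑ i ∈ s, log (Gamma (i / 2)) ≤ s.card * log m ! := by
  rw [← nsmul_eq_mul, ← Gamma_nat_eq_factorial]
  refine Finset.sum_le_card_nsmul _ _ _ fun i hi => log_Gamma_le_log_Gamma ?_ ?_
  · have : (4 : ℝ) ≤ i := by exact_mod_cast (hs i hi).1
    linarith
  · have : (i : ℝ) ≤ 2 * (m + 1) := by exact_mod_cast (hs i hi).2
    linarith

lemma abs_natCast_sub_half_le {m n k : ℕ} (h₁ : 2 * m ≤ n + k) (h₂ : n ≤ 2 * m + k) :
    |(m : ℝ) - 1 / 2 * n| ≤ k := by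
  have h₁ : (2 * m : ℝ) ≤ n + k := by exact_mod_cast h₁
  have h₂ : (n : ℝ) ≤ 2 * m + k := by exact_mod_cast h₂
  rw [abs_le]
  constructor <;> linarith

lemma tendsto_sum_log_Gamma_half_Ioc_div_sub_log {p : ℕ} (hp : 0 < p) :
    Tendsto (fun n : ℕ => (∑ i ∈ Finset.Ioc n (n + p), log (Gamma (i / 2))) / (p * n)
      - log n / 2) atTop (𝓝 (-(log 2 + 1) / 2)) := by
  have hlim : ∀ j : ℕ → ℕ, (∀ n, 2 * j n ≤ n + (p + 2) ∧ n ≤ 2 * j n + (p + 2)) →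
      Tendsto (fun n : ℕ => log (j n)! / n - log n / 2) atTop (𝓝 (-(log 2 + 1) / 2)) := by
    intro j hj
    have := tendsto_log_factorial_comp_div_sub_log (a := 1 / 2) one_half_pos
      (Eventually.of_forall fun n => abs_natCast_sub_half_le (hj n).1 (hj n).2)
    rw [one_div, log_inv] at this
    convert this using 2 <;> ring
  refine tendsto_of_tendsto_of_tendsto_of_le_of_le'
    (hlim (fun n => (n - 1) / 2) fun n => by omega) (hlim (fun n => (n + p) / 2) fun n => by omega)
    ?_ ?_
  · filter_upwards [eventually_ge_atTop 3] with n hn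
    have hsum := card_mul_log_factorial_le_sum_log_Gamma_half (m := (n - 1) / 2)
      (s := Finset.Ioc n (n + p)) (by omega) fun i hi => by rw [Finset.mem_Ioc] at hi; omega
    rw [Nat.card_Ioc, add_tsub_cancel_left] at hsum
    have hn : (0 : ℝ) < n := by positivity
    rw [sub_le_sub_iff_right, div_le_div_iff₀ hn (by positivity)]
    nlinarith
  · filter_upwards [eventually_ge_atTop 3] with n hn
    have hsum := sum_log_Gamma_half_le_card_mul_log_factorial (m := (n + p) / 2)
      (s := Finset.Ioc n (n + p)) fun i hi => by rw [Finset.mem_Ioc] at hi; omega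
    rw [Nat.card_Ioc, add_tsub_cancel_left] at hsum
    have hn : (0 : ℝ) < n := by positivity
    rw [sub_le_sub_iff_right, div_le_div_iff₀ (by positivity) hn]
    nlinarith

lemma prod_Icc_one_add_eq_mul_prod_Ioc (f : ℕ → ℝ) (n p : ℕ) :
    ∏ i ∈ Finset.Icc 1 (n + p), f i =
      (∏ i ∈ Finset.Icc 1 n, f i) * ∏ i ∈ Finset.Ioc n (n + p), f i := by
  rw [← zero_add 1, Finset.Icc_add_one_left_eq_Ioc, Finset.Icc_add_one_left_eq_Ioc,
    Finset.prod_Ioc_consecutive _ (Nat.zero_le n) (Nat.le_add_right n p)]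

lemma log_kacRiceConst_add {p n : ℕ} (hp : 0 < p) (hn : 0 < n) :
    log (kacRiceConst p (n + p)) =
      p * n / 2 * log π + ∑ i ∈ Finset.Icc 1 p, log (Gamma (i / 2))
      - ∑ i ∈ Finset.Ioc n (n + p), log (Gamma (i / 2))
      + (p * n + 1) / 2 * log (p * n / (2 * π)) := by
  have hΓ {s : Finset ℕ} (hs : ∀ i ∈ s, 0 < i) : ∀ i ∈ s, Gamma ((i : ℝ) / 2) ≠ 0 :=
    fun i hi => by have := hs i hi; positivity
  have hP := hΓ (s := Finset.Icc 1 p) fun i hi => by grind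
  have hQ := hΓ (s := Finset.Ioc n (n + p)) fun i hi => by grind
  have hR := hΓ (s := Finset.Icc 1 n) fun i hi => by grind
  have hK : kacRiceConst p (n + p) = π ^ (p * n / 2 : ℝ) *
      ((∏ i ∈ Finset.Icc 1 p, Gamma ((i : ℝ) / 2)) /
        ∏ i ∈ Finset.Ioc n (n + p), Gamma ((i : ℝ) / 2))
      * (p * n / (2 * π) : ℝ) ^ ((p * n + 1) / 2 : ℝ) := by
    rw [kacRiceConst, add_tsub_cancel_right, prod_Icc_one_add_eq_mul_prod_Ioc, Nat.cast_add,
      add_sub_cancel_right, mul_comm (∏ i ∈ Finset.Icc 1 n, _),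
      mul_div_mul_right _ _ (Finset.prod_ne_zero_iff.mpr hR)]
  have hP' := Finset.prod_ne_zero_iff.mpr hP
  have hQ' := Finset.prod_ne_zero_iff.mpr hQ
  have hpn : (0 : ℝ) < p * n / (2 * π) := by
    have : (0 : ℝ) < p * n := by exact_mod_cast Nat.mul_pos hp hn
    positivity
  rw [hK, log_mul (mul_ne_zero (by positivity) (div_ne_zero hP' hQ')) (rpow_pos_of_pos hpn _).ne',
    log_mul (by positivity) (div_ne_zero hP' hQ'),
    log_rpow pi_pos, log_div hP' hQ', log_rpow hpn, log_prod hP, log_prod hQ]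
  ring

lemma tendsto_log_kacRiceConst_add_div {p : ℕ} (hp : 0 < p) :
    Tendsto (fun n : ℕ => log (kacRiceConst p (n + p)) / (p * n)) atTop
      (𝓝 ((log p + 1) / 2)) := by
  set S := ∑ i ∈ Finset.Icc 1 p, log (Gamma ((i : ℝ) / 2))
  have hp' : (0 : ℝ) < p := Nat.cast_pos.mpr hp
  have hc : log (p / (2 * π)) = log p - log 2 - log π := by
    rw [log_div hp'.ne' (by positivity), log_mul two_ne_zero pi_ne_zero, sub_sub]
  have hlim := ((((tendsto_const_nhds (x := log π / 2)).add
    (tendsto_one_div_atTop_nhds_zero_nat.const_mul ((S + log (p / (2 * π)) / 2) / p))).sub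
    (tendsto_sum_log_Gamma_half_Ioc_div_sub_log hp)).add_const (log (p / (2 * π)) / 2)).add
    (tendsto_log_natCast_div_self.div_const (2 * p))
  rw [show log π / 2 + (S + log (p / (2 * π)) / 2) / p * 0 - -(log 2 + 1) / 2
      + log (p / (2 * π)) / 2 + 0 / (2 * p) = (log p + 1) / 2 by rw [hc]; ring] at hlim
  refine hlim.congr' ?_
  filter_upwards [eventually_gt_atTop 0] with n hn
  have hn' : (0 : ℝ) < n := Nat.cast_pos.mpr hn
  rw [log_kacRiceConst_add hp hn, show (p : ℝ) * n / (2 * π) = p / (2 * π) * n by ring,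
    log_mul (by positivity) hn'.ne']
  field_simp
  ring

/-- For fixed `p ≥ 2`,
`lim_{d→∞} (1/(p(d-p))) log K(p,d) = (log p + 1)/2`. -/
theorem stmt15 (p : ℕ) (hp : 2 ≤ p) :
    Tendsto (fun d : ℕ => Real.log (kacRiceConst p d) / ((p : ℝ) * ((d : ℝ) - (p : ℝ))))
      atTop (nhds ((Real.log p + 1) / 2)) := by
  refine ((tendsto_log_kacRiceConst_add_div (by omega)).comp (tendsto_sub_atTop_nat p)).congr' ?_
  filter_upwards [eventually_ge_atTop p] with d hd
  simp only [Function.comp_apply, Nat.sub_add_cancel hd, Nat.cast_sub hd]
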